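/- arXiv:2006.01980 — 3 statements merged into one kernel-verified Lean document; each statement's English description precedes it below -/
import Mathlib

section
/- Suppose a binary tree T of height d₁ + d₂ + ... + d_n − (n − 1) has all its vertices colored by n colors c₁,...,c_n (the d_i are positive integers). Then there exists an index i such that T contains a sub-tree of height d_i all of whose internal vertices are colored by c_i. -/
/-- A complete binary tree of height `h` (the number of vertices on any root-to-leaf
path) with every vertex colored by an element of `α`. -/
inductive CBT (α : Type*) : ℕ → Type _
  | leaf : CBT α 0
  | node {h : ℕ} : α → CBT α h → CBT α h → CBT α (h + 1)

/-- The set of colors appearing at the vertices of a tree. -/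
def CBT.colors {α : Type*} : ∀ {h : ℕ}, CBT α h → Set α
  | _, .leaf => ∅
  | _, .node a l r => insert a (l.colors ∪ r.colors)

/-- `SubMono c t d` : `t` contains a sub-tree of height `d` all of whose internal
vertices are colored `c`.  Sub-trees are defined recursively: any node is a sub-tree of
height `1` (no color constraint, since it has no internal vertex); a sub-tree of height
`d + 1` joins, at a node colored `c`, a height-`d` sub-tree of the left child's tree and
a height-`d` sub-tree of the right child's tree. -/
inductive SubMono {α : Type*} (c : α) : ∀ {h : ℕ}, CBT α h → ℕ → Prop
  | zero {h : ℕ} (t : CBT α h) : SubMono c t 0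
  | one {h : ℕ} (a : α) (l r : CBT α h) : SubMono c (.node a l r) 1
  | descend_left {h : ℕ} (a : α) (l r : CBT α h) {d : ℕ} :
      SubMono c l d → SubMono c (.node a l r) d
  | descend_right {h : ℕ} (a : α) (l r : CBT α h) {d : ℕ} :
      SubMono c r d → SubMono c (.node a l r) d
  | join {h : ℕ} (l r : CBT α h) {d : ℕ} :
      SubMono c l d → SubMono c r d → SubMono c (.node c l r) (d + 1)

/-! Induct on the height `h`, keeping the invariant `∑ i, d i < h + #colors`. At a root of
color `c j` with `d j > 0`, lower `d j` by one (the invariant survives the loss of one level of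
height) and recurse into both children: if both return color `c j`, their sub-trees of height
`d j - 1` join at the root; otherwise one child already holds a sub-tree for another color at its
full demand. At a leaf the invariant forces some `d i = 0`. -/

open Finset Function

section

variable {α ι : Type*} [DecidableEq ι]

theorem sum_update_sub_one_add_one [Fintype ι] {d : ι → ℕ} {j : ι} (hj : d j ≠ 0) :
    ∑ i, update d j (d j - 1) i + 1 = ∑ i, d i := by
  rw [sum_update_of_mem (mem_univ j), sum_eq_add_sum_sdiff_singleton_of_mem (mem_univ j) d]
  omega

theorem SubMono.exists_node_of_update {c : ι → α} {d : ι → ℕ} {j : ι} (hj : d j ≠ 0) {h : ℕ}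
    {l r : CBT α h} (hl : ∃ i, SubMono (c i) l (update d j (d j - 1) i))
    (hr : ∃ i, SubMono (c i) r (update d j (d j - 1) i)) :
    ∃ i, SubMono (c i) (.node (c j) l r) (d i) := by
  obtain ⟨il, hil⟩ := hl
  obtain ⟨ir, hir⟩ := hr
  by_cases hlj : il = j
  · by_cases hrj : ir = j
    · rw [hlj] at hil
      rw [hrj] at hir
      refine ⟨j, Nat.sub_add_cancel (Nat.one_le_iff_ne_zero.mpr hj) ▸ ?_⟩
      exact .join l r (by simpa using hil) (by simpa using hir)
    · exact ⟨ir, .descend_right _ l r (by simpa [update_of_ne hrj] using hir)⟩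
  · exact ⟨il, .descend_left _ l r (by simpa [update_of_ne hlj] using hil)⟩

theorem CBT.exists_subMono_of_sum_lt [Fintype ι] (c : ι → α) :
    ∀ {h : ℕ} (t : CBT α h) (d : ι → ℕ), ∑ i, d i < h + Fintype.card ι →
      t.colors ⊆ Set.range c → ∃ i, SubMono (c i) t (d i)
  | _, .leaf, d, hsum, _ => by
    obtain ⟨i, -, hi⟩ : ∃ i ∈ univ, d i < 1 := exists_lt_of_sum_lt (by simpa using hsum)
    exact ⟨i, by rw [Nat.lt_one_iff.mp hi]; exact .zero _⟩
  | h + 1, .node a l r, d, hsum, hcol => by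
    simp only [CBT.colors, Set.insert_subset_iff, Set.union_subset_iff] at hcol
    obtain ⟨⟨j, rfl⟩, hl, hr⟩ := hcol
    by_cases hj : d j = 0
    · exact ⟨j, hj ▸ .zero _⟩
    have hsum' : ∑ i, update d j (d j - 1) i < h + Fintype.card ι := by
      have := sum_update_sub_one_add_one hj
      omega
    exact SubMono.exists_node_of_update hj (exists_subMono_of_sum_lt c l _ hsum' hl)
      (exists_subMono_of_sum_lt c r _ hsum' hr)

end

theorem colored_subtree_lemma_general {α : Type*} {n : ℕ} (hn : 0 < n)
    (c : Fin n → α) (d : Fin n → ℕ)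
    (t : CBT α ((∑ i, d i) - (n - 1)))
    (hcol : t.colors ⊆ Set.range c) :
    ∃ i, SubMono (c i) t (d i) :=
  t.exists_subMono_of_sum_lt c d (by rw [Fintype.card_fin]; omega) hcol

/-- Colored sub-tree lemma: if all vertices of a binary tree of height
`d₁ + ⋯ + d_n - (n - 1)` are colored with the colors `c 1, …, c n`, then for some `i`
the tree contains a sub-tree of height `d i` whose internal vertices all have color
`c i`. -/
theorem colored_subtree_lemma {α : Type*} {n : ℕ} (hn : 0 < n)
    (c : Fin n → α) (d : Fin n → ℕ) (hd : ∀ i, 0 < d i)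
    (t : CBT α ((∑ i, d i) - (n - 1)))
    (hcol : t.colors ⊆ Set.range c) :
    ∃ i, SubMono (c i) t (d i) :=
  colored_subtree_lemma_general hn c d t hcol
end

section
/- If a multi-class hypothesis class H ⊆ [K]^X satisfies Ldim_{2τ}(H) ≥ K^{K²t}, then H contains t threshold functions with gap τ: there exist labels k, k' ∈ [K] with |k − k'| > τ, points x₁,...,x_t ∈ X, and hypotheses h₁,...,h_t ∈ H such that h_i(x_j) = k whenever i ≤ j and h_i(x_j) = k' whenever i > j. -/
/-!
Colour each node of a shattered tree of depth `K ^ (K ^ 2 * t)` by its pair of edge labels. By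
Ramsey's theorem for trees there is a deep subtree in which every node has the same labels
`(k, k')`, with `|k - k'| > 2τ`. In such a tree one builds, row by row, hypotheses `g i` and
pairs of points `y j`, `z j` with `g i (y j) = g i (z j) = w i` for `i ≤ j` while `g i (y j) = k`
and `g i (z j) = k'` for `j < i`. Pigeonholing the values `w i ∈ [K]` gives `t` rows with a common
value `c`, and `c` is more than `τ` away from `k` or from `k'`: the rows at the points `y` or at
the points `z` are then `t` thresholds with gap `τ`.
-/

/-- `Shatters τ H d` : the multi-class hypothesis class `H` shatters a binary mistake
tree of depth `d` with tolerance `τ`: internal nodes are labeled by instances and the two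
descending edges at a node carry labels `k, k'` with `|k - k'| > τ`; every root-to-leaf
path is realized by some hypothesis in `H`. -/
inductive Shatters {X : Type*} (τ : ℕ) : Set (X → ℕ) → ℕ → Prop
  | base (H : Set (X → ℕ)) (hne : H.Nonempty) : Shatters τ H 0
  | step (H : Set (X → ℕ)) (x : X) (k k' : ℕ) (d : ℕ)
      (hgap : (τ : ℤ) < |(k : ℤ) - (k' : ℤ)|)
      (hl : Shatters τ {h ∈ H | h x = k} d)
      (hr : Shatters τ {h ∈ H | h x = k'} d) : Shatters τ H (d + 1)

/-- The Littlestone dimension of `H` with tolerance `τ`: the maximal depth of a shattered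
binary mistake tree whose edge labels at each node differ by more than `τ`. -/
noncomputable def Ldim {X : Type*} (τ : ℕ) (H : Set (X → ℕ)) : ℕ∞ :=
  sSup {N : ℕ∞ | ∃ d : ℕ, N = d ∧ Shatters τ H d}


inductive ShattersBy {X : Type*} (P : X → ℕ → ℕ → Prop) : Set (X → ℕ) → ℕ → Prop
  | base (C : Set (X → ℕ)) (hne : C.Nonempty) : ShattersBy P C 0
  | node (C : Set (X → ℕ)) (x : X) (k k' d : ℕ) (hP : P x k k')
      (hl : ShattersBy P {h ∈ C | h x = k} d)
      (hr : ShattersBy P {h ∈ C | h x = k'} d) : ShattersBy P C (d + 1)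

namespace ShattersBy

variable {X : Type*} {P : X → ℕ → ℕ → Prop} {C : Set (X → ℕ)} {d : ℕ}

theorem nonempty (hT : ShattersBy P C d) : C.Nonempty := by
  induction hT with
  | base _ hne => exact hne
  | node _ _ _ _ _ _ _ _ ihl => exact ihl.mono fun _ hf => hf.1

theorem mono {P' : X → ℕ → ℕ → Prop} (hP : ∀ x k k', P x k k' → P' x k k')
    {C' : Set (X → ℕ)} (hC : C ⊆ C') (hT : ShattersBy P C d) : ShattersBy P' C' d := by
  induction hT generalizing C' with
  | base _ hne => exact .base C' (hne.mono hC)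
  | node _ x k k' d hxk _ _ ihl ihr =>
    exact .node C' x k k' d (hP x k k' hxk) (ihl fun f hf => ⟨hC hf.1, hf.2⟩)
      (ihr fun f hf => ⟨hC hf.1, hf.2⟩)

theorem exists_node (hT : ShattersBy P C (d + 1)) :
    ∃ x k k', P x k k' ∧ ShattersBy P {h ∈ C | h x = k} d ∧
      ShattersBy P {h ∈ C | h x = k'} d := by
  cases hT with
  | node _ x k k' _ hP hl hr => exact ⟨x, k, k', hP, hl, hr⟩

theorem exists_monochromatic {α : Type*} [DecidableEq α] (c : X → ℕ → ℕ → α) (s : Finset α)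
    (hc : ∀ x k k', P x k k' → c x k k' ∈ s) (hT : ShattersBy P C d) (b : α → ℕ)
    (hb : ∑ a ∈ s, b a < d) :
    ∃ a ∈ s, ShattersBy (fun x k k' => P x k k' ∧ c x k k' = a) C (b a + 1) := by
  induction hT generalizing b with
  | base _ _ => exact absurd hb (Nat.not_lt_zero _)
  | node C x k k' d hP hl hr ihl ihr =>
    set a₀ := c x k k'
    have ha₀ : a₀ ∈ s := hc x k k' hP
    rcases hb₀ : b a₀ with _ | e
    · refine ⟨a₀, ha₀, ?_⟩
      rw [hb₀]
      exact .node C x k k' 0 ⟨hP, rfl⟩ (.base _ hl.nonempty) (.base _ hr.nonempty)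
    -- Spending one unit of the budget of `a₀` on the root leaves enough depth in both subtrees.
    have hb' : ∑ a ∈ s, Function.update b a₀ e a < d := by
      have := Finset.sum_update_of_mem ha₀ b e
      have := Finset.sum_eq_add_sum_sdiff_singleton_of_mem ha₀ b
      omega
    obtain ⟨a₁, ha₁, hT₁⟩ := ihl _ hb'
    obtain ⟨a₂, ha₂, hT₂⟩ := ihr _ hb'
    by_cases h₁ : a₁ = a₀
    · by_cases h₂ : a₂ = a₀
      · subst h₁ h₂
        refine ⟨a₀, ha₀, ?_⟩
        rw [Function.update_self] at hT₁ hT₂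
        rw [hb₀]
        exact .node C x k k' (e + 1) ⟨hP, rfl⟩ hT₁ hT₂
      · rw [Function.update_of_ne h₂] at hT₂
        exact ⟨a₂, ha₂, hT₂.mono (fun _ _ _ h => h) fun _ hf => hf.1⟩
    · rw [Function.update_of_ne h₁] at hT₁
      exact ⟨a₁, ha₁, hT₁.mono (fun _ _ _ h => h) fun _ hf => hf.1⟩

end ShattersBy

theorem Shatters.shattersBy {X : Type*} {τ K d : ℕ} {C : Set (X → ℕ)} (hS : Shatters τ C d)
    (hC : ∀ h ∈ C, ∀ x, h x ∈ Finset.Icc 1 K) :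
    ShattersBy (fun _ k k' => (τ : ℤ) < |(k : ℤ) - (k' : ℤ)| ∧
      k ∈ Finset.Icc 1 K ∧ k' ∈ Finset.Icc 1 K) C d := by
  induction hS with
  | base C hne => exact .base C hne
  | step C x k k' d hgap _ _ ihl ihr =>
    have hl := ihl fun h hh => hC h hh.1
    have hr := ihr fun h hh => hC h hh.1
    obtain ⟨f, hfC, rfl⟩ := hl.nonempty
    obtain ⟨f', hf'C, rfl⟩ := hr.nonempty
    exact .node C x _ _ d ⟨hgap, hC f hfC x, hC f' hf'C x⟩ hl hr

def IsStaircase {X : Type*} {n : ℕ} (u : Fin n → ℕ) (ℓ : ℕ) (x : Fin n → X)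
    (f : Fin n → X → ℕ) : Prop :=
  ∀ i j, (i ≤ j → f i (x j) = u i) ∧ (j < i → f i (x j) = ℓ)

namespace IsStaircase

variable {X : Type*} {n : ℕ} {u : Fin n → ℕ} {ℓ : ℕ} {x : Fin n → X} {f : Fin n → X → ℕ}

theorem cons (hs : IsStaircase u ℓ x f) {u₀ : ℕ} {x₀ : X} {f₀ : X → ℕ} (h₀ : f₀ x₀ = u₀)
    (hrow : ∀ j, f₀ (x j) = u₀) (hcol : ∀ i, f i x₀ = ℓ) :
    IsStaircase (Fin.cons u₀ u) ℓ (Fin.cons x₀ x) (Fin.cons f₀ f) := by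
  intro i j
  cases i using Fin.cases <;> cases j using Fin.cases <;>
    simp [Fin.succ_le_succ_iff, Fin.succ_lt_succ_iff, Fin.succ_pos, h₀, hrow, hcol]
  exact hs _ _

theorem comp_of_eq_const {m c : ℕ} (hs : IsStaircase u ℓ x f) (σ : Fin m ↪o Fin n)
    (hc : ∀ i, u (σ i) = c) : IsStaircase (fun _ => c) ℓ (x ∘ σ) (f ∘ σ) := fun _ _ =>
  ⟨fun hij => ((hs _ _).1 (σ.le_iff_le.2 hij)).trans (hc _),
    fun hji => (hs _ _).2 (σ.lt_iff_lt.2 hji)⟩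

end IsStaircase

/-- Each row of the staircase costs one colour refinement (a factor `K`) and two tree levels. -/
def staircaseDepth (K : ℕ) : ℕ → ℕ
  | 0 => 0
  | s + 1 => K * (staircaseDepth K s + 1) + 1

/-- The first row `g₀` is any hypothesis of the class; after making `g₀` constant (`= w₀`) on all
nodes, the hypotheses going left at the root `x₁` and then right at the next node `x₂` take the
values `k` at `x₁` and `k'` at `x₂`, and the remaining rows are found among them. -/
theorem ShattersBy.exists_staircase {X : Type*} {K k k' : ℕ} (s : ℕ) {S : Set X}
    {C : Set (X → ℕ)} {m : ℕ} (hC : ∀ h ∈ C, ∀ x, h x ∈ Finset.Icc 1 K)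
    (hT : ShattersBy (fun x a b => x ∈ S ∧ a = k ∧ b = k') C m) (hm : staircaseDepth K s ≤ m) :
    ∃ (g : Fin s → X → ℕ) (w : Fin s → ℕ) (y z : Fin s → X),
      (∀ i, g i ∈ C) ∧ (∀ i, w i ∈ Finset.Icc 1 K) ∧ (∀ j, y j ∈ S ∧ z j ∈ S) ∧
      IsStaircase w k y g ∧ IsStaircase w k' z g := by
  induction s generalizing S C m with
  | zero => exact ⟨Fin.elim0, Fin.elim0, Fin.elim0, Fin.elim0, nofun, nofun, nofun, nofun, nofun⟩
  | succ s ih =>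
    obtain ⟨g₀, hg₀⟩ := hT.nonempty
    have hbudget : ∑ _w ∈ Finset.Icc 1 K, (staircaseDepth K s + 1) < m := by
      simp only [Finset.sum_const, Nat.card_Icc, add_tsub_cancel_right, smul_eq_mul]
      exact Nat.lt_of_succ_le hm
    obtain ⟨w₀, hw₀, hT₀⟩ := hT.exists_monochromatic (fun x _ _ => g₀ x) (Finset.Icc 1 K)
      (fun x _ _ _ => hC g₀ hg₀ x) _ hbudget
    obtain ⟨x₁, _, _, ⟨⟨hx₁, rfl, rfl⟩, hg₀x₁⟩, hl, -⟩ := hT₀.exists_node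
    obtain ⟨x₂, _, _, ⟨⟨hx₂, rfl, rfl⟩, hg₀x₂⟩, -, hr⟩ := hl.exists_node
    obtain ⟨g, w, y, z, hg, hw, hyz, hy, hz⟩ := ih (S := {x ∈ S | g₀ x = w₀})
      (fun h hh => hC h hh.1.1)
      (hr.mono (fun _ _ _ ⟨⟨hS, ha, hb⟩, hw⟩ => ⟨⟨hS, hw⟩, ha, hb⟩) subset_rfl) le_rfl
    refine ⟨Fin.cons g₀ g, Fin.cons w₀ w, Fin.cons x₁ y, Fin.cons x₂ z,
      Fin.cases hg₀ fun i => (hg i).1.1, Fin.cases hw₀ hw,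
      Fin.cases ⟨hx₁, hx₂⟩ fun j => ⟨(hyz j).1.1, (hyz j).2.1⟩,
      hy.cons hg₀x₁ (fun j => (hyz j).1.2) fun i => (hg i).1.2,
      hz.cons hg₀x₂ (fun j => (hyz j).2.2) fun i => (hg i).2⟩

theorem staircaseDepth_add_three_le {K : ℕ} (hK : 2 ≤ K) (s : ℕ) :
    staircaseDepth K s + 3 ≤ 3 * K ^ s := by
  induction s with
  | zero => simp [staircaseDepth]
  | succ s ih =>
    calc staircaseDepth K (s + 1) + 3 ≤ K * (staircaseDepth K s + 3) := by
          simp only [staircaseDepth]; nlinarith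
      _ ≤ 3 * K ^ (s + 1) := by rw [pow_succ]; nlinarith

theorem offDiag_card_mul_staircaseDepth_lt {K t : ℕ} (ht : 0 < t) :
    (Finset.Icc 1 K).offDiag.card * staircaseDepth K (K * (t - 1) + 1) < K ^ (K ^ 2 * t) := by
  rw [Finset.offDiag_card, Nat.card_Icc, add_tsub_cancel_right, ← Nat.mul_sub_one]
  rcases Nat.lt_or_ge K 2 with hK | hK
  · interval_cases K <;> simp
  obtain ⟨u, rfl⟩ : ∃ u, t = u + 1 := ⟨t - 1, by omega⟩
  obtain ⟨L, rfl⟩ : ∃ L, K = L + 2 := ⟨K - 2, by omega⟩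
  have hM := staircaseDepth_add_three_le hK ((L + 2) * u + 1)
  simp only [add_tsub_cancel_right] at hM ⊢
  calc (L + 2) * (L + 1) * staircaseDepth (L + 2) ((L + 2) * u + 1)
      < (L + 2) * (L + 1) * (3 * (L + 2) ^ ((L + 2) * u + 1)) := by gcongr; omega
    _ = 3 * (L + 1) * (L + 2) ^ ((L + 2) * u + 2) := by ring
    _ ≤ (L + 2) ^ 2 * (L + 2) ^ ((L + 2) * u + 2) := by gcongr; nlinarith
    _ = (L + 2) ^ ((L + 2) * u + 4) := by ring
    _ ≤ (L + 2) ^ ((L + 2) ^ 2 * (u + 1)) :=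
        Nat.pow_le_pow_right (by omega) (by
          have := Nat.mul_le_mul_right u (Nat.le_self_pow two_ne_zero (L + 2))
          nlinarith)

theorem exists_shatters_of_lt_Ldim {X : Type*} {τ m : ℕ} {H : Set (X → ℕ)}
    (h : (m : ℕ∞) < Ldim τ H) : ∃ d, m < d ∧ Shatters τ H d := by
  obtain ⟨_, ⟨d, rfl, hS⟩, hlt⟩ := lt_sSup_iff.1 h
  exact ⟨d, by exact_mod_cast hlt, hS⟩

theorem Fin.exists_orderEmbedding_const {α : Type*} [DecidableEq α] {m n : ℕ} (s : Finset α)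
    (w : Fin n → α) (hw : ∀ i, w i ∈ s) (hn : s.card * (m - 1) < n) :
    ∃ c ∈ s, ∃ σ : Fin m ↪o Fin n, ∀ i, w (σ i) = c := by
  obtain ⟨c, hc, hfiber⟩ := Finset.exists_lt_card_fiber_of_mul_lt_card_of_maps_to
    (s := Finset.univ) (fun i _ => hw i) (by simpa using hn)
  exact ⟨c, hc, Finset.orderEmbOfCardLe {i | w i = c} (by omega),
    fun i => by simpa using Finset.orderEmbOfCardLe_mem {i | w i = c} _ i⟩

theorem lt_abs_sub_or_lt_abs_sub {τ a b : ℤ} (c : ℤ) (h : 2 * τ < |a - b|) :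
    τ < |c - a| ∨ τ < |c - b| := by
  by_contra! hc
  have := abs_sub_le a c b
  rw [abs_sub_comm a c] at this
  linarith [hc.1, hc.2]

/-- If a multi-class hypothesis class `H ⊆ [K]^X` satisfies `Ldim_{2τ}(H) ≥ K^(K²t)`,
then `H` contains `t` threshold functions with gap `τ`. -/
theorem thresholds_of_large_Ldim {X : Type*} {K τ t : ℕ} (ht : 0 < t)
    {H : Set (X → ℕ)} (hH : ∀ h ∈ H, ∀ x, h x ∈ Finset.Icc 1 K)
    (hld : ((K ^ (K ^ 2 * t) : ℕ) : ℕ∞) ≤ Ldim (2 * τ) H) :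
    ∃ (k k' : ℕ) (x : Fin t → X) (f : Fin t → X → ℕ),
      k ∈ Finset.Icc 1 K ∧ k' ∈ Finset.Icc 1 K ∧
      (τ : ℤ) < |(k : ℤ) - (k' : ℤ)| ∧
      (∀ i, f i ∈ H) ∧
      (∀ i j : Fin t, (i ≤ j → f i (x j) = k) ∧ (j < i → f i (x j) = k')) := by
  set N := K * (t - 1) + 1
  obtain ⟨d, hd, hS⟩ := exists_shatters_of_lt_Ldim <|
    (Nat.cast_lt.2 (offDiag_card_mul_staircaseDepth_lt ht)).trans_le hld
  obtain ⟨⟨k, k'⟩, hkk', hT⟩ := (hS.shattersBy hH).exists_monochromatic (fun _ k k' => (k, k'))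
    (Finset.Icc 1 K).offDiag
    (fun _ k k' ⟨hgap, hk, hk'⟩ => Finset.mem_offDiag.2 ⟨hk, hk', fun h => by
      simp [show k = k' from h] at hgap; omega⟩)
    (fun _ => staircaseDepth K N) (by simpa using hd)
  obtain ⟨_, _, _, ⟨⟨hgap, -⟩, hpair⟩, -⟩ := hT.exists_node
  obtain ⟨rfl, rfl⟩ := Prod.mk.inj hpair.symm
  obtain ⟨g, w, y, z, hg, hw, -, hy, hz⟩ := ShattersBy.exists_staircase (S := Set.univ) N hH
    (hT.mono (fun _ _ _ ⟨_, hpair⟩ => ⟨trivial, Prod.mk.inj hpair⟩) subset_rfl) (Nat.le_succ _)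
  obtain ⟨c, hc, σ, hwσ⟩ := Fin.exists_orderEmbedding_const (m := t) _ w hw (by simp [N])
  obtain ⟨hk, hk', -⟩ := Finset.mem_offDiag.1 hkk'
  rcases lt_abs_sub_or_lt_abs_sub c (by push_cast at hgap; exact hgap) with hfar | hfar
  · exact ⟨c, k, y ∘ σ, g ∘ σ, hc, hk, hfar, fun _ => hg _, hy.comp_of_eq_const σ hwσ⟩
  · exact ⟨c, k', z ∘ σ, g ∘ σ, hc, hk', hfar, fun _ => hg _, hz.comp_of_eq_const σ hwσ⟩
end

section
/- For any real-valued function class F ⊆ [-1,1]^X with finite sequential Pollard pseudo-dimension, and any discretization scale γ > 0, the Littlestone dimension of the discretized multi-class class is bounded: Ldim([F]_γ) ≤ Pdim(F). -/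
/-- Discretization at scale `η`: `disc η f x` is the index of the length-`η` interval of
`[-1, 1]` containing `f x`. -/
noncomputable def disc {X : Type*} (η : ℝ) (f : X → ℝ) : X → ℕ :=
  fun x => (⌊(f x + 1) / η⌋).toNat

/-- `Bf f (x, s) = sign (f x - s)`, encoded with labels `1` (for `+1`) and `0` (for `-1`). -/
noncomputable def Bf {X : Type*} (f : X → ℝ) : X × ℝ → ℕ :=
  fun p => if p.2 ≤ f p.1 then 1 else 0

/-- The induced binary class `F⁺ = {B_f : f ∈ F}` over the domain `X × ℝ`. -/
noncomputable def Fplus {X : Type*} (F : Set (X → ℝ)) : Set (X × ℝ → ℕ) := Bf '' F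

/-! A mistake tree for `[F]_γ` becomes one for `F⁺` node by node: two distinct edge labels
`k < k'` at an instance `x` are separated by the threshold `s = (k + 1) γ - 1`, since
`f x ≥ s` exactly when `[f]_γ(x) > k`. So the node `x` with labels `k, k'` is replaced by
the node `(x, s)` with labels `0, 1`, and the subtrees are transported by induction. -/

section Transport

variable {X Y α : Type*}

theorem Shatters.mono {τ : ℕ} {H H' : Set (X → ℕ)} {d : ℕ}
    (h : Shatters τ H d) (hsub : H ⊆ H') : Shatters τ H' d := by
  induction h generalizing H' with
  | base H hne => exact .base _ (hne.mono hsub)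
  | step H x k k' d hgap _ _ ihl ihr =>
    exact .step _ x k k' d hgap (ihl fun _ hh => ⟨hsub hh.1, hh.2⟩)
      (ihr fun _ hh => ⟨hsub hh.1, hh.2⟩)

theorem sep_image_apply_eq (u : α → X → ℕ) (G : Set α) (x : X) (k : ℕ) :
    {h ∈ u '' G | h x = k} = u '' {a ∈ G | u a x = k} := by
  ext h
  constructor
  · rintro ⟨⟨a, ha, rfl⟩, hx⟩
    exact ⟨a, ⟨ha, hx⟩, rfl⟩
  · rintro ⟨a, ⟨ha, hx⟩, rfl⟩
    exact ⟨⟨a, ha, rfl⟩, hx⟩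

theorem Shatters.of_image {u : α → X → ℕ} {v : α → Y → ℕ} {τ τ' : ℕ}
    (hsep : ∀ x (k k' : ℕ), (τ : ℤ) < |(k : ℤ) - k'| →
      ∃ (y : Y) (l l' : ℕ), (τ' : ℤ) < |(l : ℤ) - l'| ∧
        ∀ a, (u a x = k → v a y = l) ∧ (u a x = k' → v a y = l')) :
    ∀ {d : ℕ} {G : Set α}, Shatters τ (u '' G) d → Shatters τ' (v '' G) d := by
  intro d
  induction d with
  | zero =>
    rintro G ⟨_, hne⟩
    exact .base _ (Set.image_nonempty.2 (Set.image_nonempty.1 hne))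
  | succ d ih =>
    intro G h
    cases h with
    | step _ x k k' _ hgap hl hr => ?_
    rw [sep_image_apply_eq] at hl hr
    obtain ⟨y, l, l', hgap', hv⟩ := hsep x k k' hgap
    refine .step _ y l l' d hgap' ((ih hl).mono ?_) ((ih hr).mono ?_)
    · rintro _ ⟨a, ⟨ha, hk⟩, rfl⟩
      exact ⟨⟨a, ha, rfl⟩, (hv a).1 hk⟩
    · rintro _ ⟨a, ⟨ha, hk⟩, rfl⟩
      exact ⟨⟨a, ha, rfl⟩, (hv a).2 hk⟩

theorem Ldim_le_Ldim_of_shatters {τ τ' : ℕ} {H : Set (X → ℕ)} {H' : Set (Y → ℕ)}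
    (h : ∀ d, Shatters τ H d → Shatters τ' H' d) : Ldim τ H ≤ Ldim τ' H' :=
  sSup_le_sSup fun _ ⟨d, hN, hd⟩ => ⟨d, hN, h d hd⟩

end Transport

section Threshold

variable {X : Type*} {γ : ℝ}

theorem Bf_threshold (hγ : 0 < γ) (f : X → ℝ) (x : X) (m : ℕ) :
    Bf f (x, (m + 1) * γ - 1) = if m < disc γ f x then 1 else 0 := by
  have hiff : (m + 1) * γ - 1 ≤ f x ↔ m < disc γ f x := by
    rw [disc, Int.lt_toNat, Int.lt_iff_add_one_le, Int.le_floor, le_div_iff₀ hγ]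
    push_cast
    constructor <;> intro h <;> linarith
  simp only [Bf, hiff]

theorem disc_labels_separated_by_Bf (hγ : 0 < γ) (x : X) (k k' : ℕ)
    (hgap : ((0 : ℕ) : ℤ) < |(k : ℤ) - k'|) :
    ∃ (y : X × ℝ) (l l' : ℕ), ((0 : ℕ) : ℤ) < |(l : ℤ) - l'| ∧
      ∀ f, (disc γ f x = k → Bf f y = l) ∧ (disc γ f x = k' → Bf f y = l') := by
  have hne : k ≠ k' := by
    rintro rfl
    simp at hgap
  refine ⟨(x, (min k k' + 1) * γ - 1), if k' < k then 1 else 0, if k < k' then 1 else 0, ?_,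
    fun f => ⟨fun hk => ?_, fun hk => ?_⟩⟩
  · rcases hne.lt_or_gt with h | h <;> simp [h, h.not_gt]
  · simp only [Bf_threshold hγ, hk, min_lt_iff, lt_irrefl, false_or]
  · simp only [Bf_threshold hγ, hk, min_lt_iff, lt_irrefl, or_false]

end Threshold

theorem Ldim_disc_le_Pdim_general {X : Type*} {F : Set (X → ℝ)}
    {γ : ℝ} (hγ : 0 < γ) :
    Ldim 0 (disc γ '' F) ≤ Ldim 0 (Fplus F) :=
  Ldim_le_Ldim_of_shatters fun _ => Shatters.of_image (disc_labels_separated_by_Bf hγ)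

/-- If `F ⊆ [-1,1]^X` has finite sequential Pollard pseudo-dimension `Pdim F = Ldim F⁺`,
then for any discretization scale `γ > 0`, `Ldim ([F]_γ) ≤ Pdim F`. -/
theorem Ldim_disc_le_Pdim {X : Type*} {F : Set (X → ℝ)}
    (hF : ∀ f ∈ F, ∀ x, f x ∈ Set.Icc (-1 : ℝ) 1)
    (hfin : Ldim 0 (Fplus F) ≠ ⊤)
    {γ : ℝ} (hγ : 0 < γ) :
    Ldim 0 (disc γ '' F) ≤ Ldim 0 (Fplus F) :=
  Ldim_disc_le_Pdim_general hγ
end
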